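/- arXiv:1604.04356 — 2 statements merged into one kernel-verified Lean document; each statement's English description precedes it below -/
import Mathlib

section
/- Let R be a commutative ring and h(y₁,…,yₙ) = y₁(1−y₁)⋯yₙ(1−yₙ) ∈ R[y₁,…,yₙ]. Let d ≥ 1 be an integer and f ∈ R[y₁,…,yₙ] a polynomial such that for each j, substituting y_j = 0 or y_j = 1 into f yields a polynomial whose degree in each remaining variable y_k is at most d. Then there exists a polynomial g ∈ R[y₁,…,yₙ] with g ≡ f mod (h) such that the degree of g in each variable y_j is at most d. -/
open MvPolynomial

namespace SuslinAux

variable {R : Type} [CommRing R] {n : ℕ}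

/-- The substitution `y_j := a`, leaving the other variables fixed. -/
noncomputable def sub1 (j : Fin n) (a : R) : Fin n → MvPolynomial (Fin n) R :=
  fun l => if l = j then (C a : MvPolynomial (Fin n) R) else X l

lemma degreeOf_X_le (k i : Fin n) :
    degreeOf k (X i : MvPolynomial (Fin n) R) ≤ if k = i then 1 else 0 := by
  classical
  rw [degreeOf_le_iff]
  intro m hm
  rw [X, support_monomial] at hm
  split at hm
  · exact absurd hm (Finset.notMem_empty m)
  · rw [Finset.mem_singleton] at hm
    subst hm
    rcases eq_or_ne k i with h | h
    · simp [h, Finsupp.single_apply]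
    · simp [h, Finsupp.single_apply, Ne.symm h]

lemma degreeOf_one_eq (k : Fin n) : degreeOf k (1 : MvPolynomial (Fin n) R) = 0 := by
  rw [← C_1]; exact degreeOf_C 1 k

lemma degreeOf_neg_le (k : Fin n) (p : MvPolynomial (Fin n) R) :
    degreeOf k (-p) ≤ degreeOf k p := by
  have h : C (-1 : R) * p = -p := by rw [C_neg, C_1, neg_one_mul]
  rw [← h]
  exact le_trans (degreeOf_mul_le k (C (-1 : R)) p) (by rw [degreeOf_C, zero_add])

lemma degreeOf_sub_le' (k : Fin n) (p q : MvPolynomial (Fin n) R) :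
    degreeOf k (p - q) ≤ max (degreeOf k p) (degreeOf k q) := by
  rw [sub_eq_add_neg]
  exact le_trans (degreeOf_add_le _ _ _)
    (max_le (le_max_left _ _) (le_trans (degreeOf_neg_le _ _) (le_max_right _ _)))

/-- Substituting `y_j := a` kills the degree in `y_j` and does not increase
degrees in the other variables. -/
lemma degreeOf_sub1_le (j k : Fin n) (a : R) (f : MvPolynomial (Fin n) R) :
    degreeOf k (aeval (sub1 j a) f) ≤ if k = j then 0 else degreeOf k f := by
  classical
  conv_lhs => rw [← support_sum_monomial_coeff f]
  rw [map_sum]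
  refine Finset.sum_induction _ (fun x => degreeOf k x ≤ if k = j then 0 else degreeOf k f)
    (fun p q hp hq => le_trans (degreeOf_add_le _ _ _) (max_le hp hq))
    (by simp [degreeOf_zero]) ?_
  intro m hm
  rw [aeval_monomial]
  refine le_trans (degreeOf_mul_le _ _ _) ?_
  have h1 : degreeOf k (algebraMap R (MvPolynomial (Fin n) R) (coeff m f)) = 0 := by
    rw [MvPolynomial.algebraMap_eq]; exact degreeOf_C _ _
  rw [h1, zero_add, Finsupp.prod]
  refine le_trans (degreeOf_prod_le _ _ _) ?_
  have hterm : ∀ i ∈ m.support,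
      degreeOf k (sub1 j a i ^ m i) ≤ if i = k ∧ ¬ k = j then m i else 0 := by
    intro i _
    refine le_trans (degreeOf_pow_le _ _ _) ?_
    rcases eq_or_ne i j with hij | hij
    · simp [sub1, hij, degreeOf_C]
    · have hx := degreeOf_X_le (R := R) k i
      rcases eq_or_ne i k with hik | hik
      · subst hik
        rcases eq_or_ne i j with h | h
        · exact absurd h hij
        · have hs : sub1 j a i = X i := by simp [sub1, hij]
          rw [hs, if_pos (And.intro rfl hij)]
          have hx1 : degreeOf i (X i : MvPolynomial (Fin n) R) ≤ 1 := by simpa using hx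
          exact le_trans (Nat.mul_le_mul_left _ hx1) (by simp)
      · have hs : sub1 j a i = X i := by simp [sub1, hij]
        rw [hs]
        have hkx : degreeOf k (X i : MvPolynomial (Fin n) R) ≤ 0 := by
          simpa [if_neg (Ne.symm hik)] using hx
        have : (if i = k ∧ ¬ k = j then m i else 0) = 0 ∨
            (if i = k ∧ ¬ k = j then m i else 0) = m i := by split <;> simp
      
        have hle : m i * degreeOf k (X i : MvPolynomial (Fin n) R) = 0 :=
          Nat.eq_zero_of_le_zero (le_trans (Nat.mul_le_mul_left _ hkx) (by simp))
        rw [hle]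
        exact Nat.zero_le _
  refine le_trans (Finset.sum_le_sum hterm) ?_
  by_cases hkj : k = j
  · simp [hkj]
  · rw [if_neg hkj]
    have : (∑ i ∈ m.support, if i = k ∧ ¬ k = j then m i else 0)
        = ∑ i ∈ m.support, if i = k then m i else 0 := by
      refine Finset.sum_congr rfl fun i _ => ?_
      by_cases h : i = k <;> simp [h, hkj]
    rw [this, Finset.sum_ite_eq' m.support k]
    split
    · exact monomial_le_degreeOf k hm
    · exact Nat.zero_le _

/-- `X j - C a` divides `f - f|_{y_j = a}`. -/
lemma dvd_sub_subst (j : Fin n) (a : R) (f : MvPolynomial (Fin n) R) :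
    (X j - C a) ∣ f - aeval (sub1 j a) f := by
  induction f using MvPolynomial.induction_on with
  | C c => simp [aeval_C, MvPolynomial.algebraMap_eq]
  | add p q hp hq =>
    have h : (p + q) - aeval (sub1 j a) (p + q)
        = (p - aeval (sub1 j a) p) + (q - aeval (sub1 j a) q) := by
      rw [map_add]; ring
    rw [h]; exact dvd_add hp hq
  | mul_X p i hp =>
    rw [map_mul, aeval_X]
    rcases eq_or_ne i j with h | h
    · subst h
      have hs : sub1 i a i = C a := by simp [sub1]
      rw [hs]
      have hrw : p * X i - aeval (sub1 i a) p * C a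
          = X i * (p - aeval (sub1 i a) p) + (aeval (sub1 i a) p) * (X i - C a) := by ring
      rw [hrw]
      exact dvd_add (Dvd.dvd.mul_left hp _) (Dvd.dvd.mul_left (dvd_refl _) _)
    · have hs : sub1 j a i = X i := by simp [sub1, h]
      rw [hs]
      have hrw : p * X i - aeval (sub1 j a) p * X i
          = (p - aeval (sub1 j a) p) * X i := by ring
      rw [hrw]
      exact Dvd.dvd.mul_right hp _

/-- Degree bound for the face interpolation operator. -/
lemma degree_L_le (d : ℕ) (hd : 1 ≤ d) (j : Fin n) (p : MvPolynomial (Fin n) R)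
    (h0 : ∀ k, degreeOf k (aeval (sub1 j (0 : R)) p) ≤ if k = j then 0 else d)
    (h1 : ∀ k, degreeOf k (aeval (sub1 j (1 : R)) p) ≤ if k = j then 0 else d)
    (k : Fin n) :
    degreeOf k ((1 - X j) * aeval (sub1 j (0 : R)) p
      + X j * aeval (sub1 j (1 : R)) p) ≤ d := by
  have hX := degreeOf_X_le (R := R) k j
  have hone : degreeOf k (1 - X j : MvPolynomial (Fin n) R) ≤ if k = j then 1 else 0 :=
    le_trans (degreeOf_sub_le' k 1 (X j)) (max_le (by simp [degreeOf_one_eq]) hX)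
  refine le_trans (degreeOf_add_le _ _ _) (max_le ?_ ?_)
  · refine le_trans (degreeOf_mul_le _ _ _) (le_trans (add_le_add hone (h0 k)) ?_)
    split <;> omega
  · refine le_trans (degreeOf_mul_le _ _ _) (le_trans (add_le_add hX (h1 k)) ?_)
    split <;> omega

end SuslinAux

/-- Lemma 2.3 of the paper. Over a commutative ring `R`, let
`h = ∏ i, yᵢ(1-yᵢ)`.  If `d ≥ 1` and `f ∈ R[y₁,…,yₙ]` is such that substituting
`y_j = 0` or `y_j = 1` yields a polynomial of degree at most `d` in each remaining
variable, then `f` has a representative `g` modulo `(h)` whose degree in every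
variable is at most `d`. -/
theorem suslin_modulus_representative_of_bounded_face_degrees
    (R : Type) [CommRing R] (n d : ℕ) (hd : 1 ≤ d)
    (f : MvPolynomial (Fin n) R)
    (hf : ∀ j k : Fin n, k ≠ j → ∀ a : R, a = 0 ∨ a = 1 →
      degreeOf k
        (aeval (fun l : Fin n => if l = j then (C a : MvPolynomial (Fin n) R) else X l) f)
        ≤ d) :
    ∃ g : MvPolynomial (Fin n) R,
      (∀ j : Fin n, degreeOf j g ≤ d) ∧
      f - g ∈ Ideal.span
        ({∏ i : Fin n, (X i * (1 - X i) : MvPolynomial (Fin n) R)} :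
          Set (MvPolynomial (Fin n) R)) := by
  classical
  open SuslinAux in
  have key : ∀ s : Finset (Fin n), ∃ g : MvPolynomial (Fin n) R,
      (∀ k, degreeOf k g ≤ d) ∧
      ∃ q, f - g = (∏ i ∈ s, (X i * (1 - X i))) * q := by
    intro s
    induction s using Finset.induction_on with
    | empty => exact ⟨0, fun k => by simp, f, by simp⟩
    | @insert j s hjs ih =>
      obtain ⟨g, hgdeg, q, hq⟩ := ih
      set P : MvPolynomial (Fin n) R := ∏ i ∈ s, (X i * (1 - X i)) with hPdef
      have hfix : ∀ a : R, aeval (sub1 j a) P = P := by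
        intro a
        rw [hPdef, map_prod]
        refine Finset.prod_congr rfl fun i hi => ?_
        have hij : i ≠ j := fun h => hjs (h ▸ hi)
        simp [sub1, hij]
      obtain ⟨w0, hw0⟩ := dvd_sub_subst j (0 : R) q
      obtain ⟨w1, hw1⟩ := dvd_sub_subst j (1 : R) q
      have hw0' : q - aeval (sub1 j (0 : R)) q = X j * w0 := by
        rw [hw0]; simp
      have hw1' : q - aeval (sub1 j (1 : R)) q = (X j - 1) * w1 := by
        rw [hw1]; simp
      have e0 : aeval (sub1 j (0 : R)) f - aeval (sub1 j (0 : R)) g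
          = P * aeval (sub1 j (0 : R)) q := by
        rw [← map_sub, hq, map_mul, hfix]
      have e1 : aeval (sub1 j (1 : R)) f - aeval (sub1 j (1 : R)) g
          = P * aeval (sub1 j (1 : R)) q := by
        rw [← map_sub, hq, map_mul, hfix]
      -- degree bounds for the two interpolation operators
      have hf0 : ∀ k, degreeOf k (aeval (sub1 j (0 : R)) f) ≤ if k = j then 0 else d := by
        intro k
        rcases eq_or_ne k j with h | h
        · rw [if_pos h]
          have := degreeOf_sub1_le j k (0 : R) f
          rwa [if_pos h] at this
        · rw [if_neg h]
          exact hf j k h 0 (Or.inl rfl)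
      have hf1 : ∀ k, degreeOf k (aeval (sub1 j (1 : R)) f) ≤ if k = j then 0 else d := by
        intro k
        rcases eq_or_ne k j with h | h
        · rw [if_pos h]
          have := degreeOf_sub1_le j k (1 : R) f
          rwa [if_pos h] at this
        · rw [if_neg h]
          exact hf j k h 1 (Or.inr rfl)
      have hg0 : ∀ k, degreeOf k (aeval (sub1 j (0 : R)) g) ≤ if k = j then 0 else d := by
        intro k
        refine le_trans (degreeOf_sub1_le j k (0 : R) g) ?_
        split
        · exact le_rfl
        · exact hgdeg k
      have hg1 : ∀ k, degreeOf k (aeval (sub1 j (1 : R)) g) ≤ if k = j then 0 else d := by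
        intro k
        refine le_trans (degreeOf_sub1_le j k (1 : R) g) ?_
        split
        · exact le_rfl
        · exact hgdeg k
      refine ⟨g + ((1 - X j) * aeval (sub1 j (0 : R)) f + X j * aeval (sub1 j (1 : R)) f)
          - ((1 - X j) * aeval (sub1 j (0 : R)) g + X j * aeval (sub1 j (1 : R)) g),
          ?_, w0 - w1, ?_⟩
      · intro k
        have hLf := degree_L_le d hd j f hf0 hf1 k
        have hLg := degree_L_le d hd j g hg0 hg1 k
        exact le_trans (degreeOf_sub_le' _ _ _)
          (max_le (le_trans (degreeOf_add_le _ _ _) (max_le (hgdeg k) hLf)) hLg)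
      · rw [Finset.prod_insert hjs, ← hPdef]
        linear_combination hq - (1 - X j) * e0 - X j * e1
          + ((1 - X j) * P) * hw0' + (X j * P) * hw1'
  obtain ⟨g, hdeg, q, hfg⟩ := key Finset.univ
  exact ⟨g, hdeg, Ideal.mem_span_singleton.mpr ⟨q, by simpa using hfg⟩⟩
end

section
/- Let R be a commutative ring, h = ∏_{i=1}^n y_i(1−y_i), and for each i define α_i(f) = f − y_i·(f|_{y_i=1}) − (1−y_i)·(f|_{y_i=0}). Then for any f ∈ R[y₁,…,yₙ], the polynomial f − α₁α₂⋯αₙ(f) is congruent to f modulo the ideal (h); equivalently, α₁⋯αₙ(f) ∈ (h). -/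
open MvPolynomial

/-- Substitution of the constant `a : R` for the variable `yᵢ`. -/
noncomputable def substVar {R : Type} [CommRing R] {n : ℕ} (i : Fin n) (a : R)
    (f : MvPolynomial (Fin n) R) : MvPolynomial (Fin n) R :=
  aeval (fun l : Fin n => if l = i then (C a : MvPolynomial (Fin n) R) else X l) f

/-- The operator `αᵢ(f) = f - yᵢ·(f|_{yᵢ=1}) - (1-yᵢ)·(f|_{yᵢ=0})`. -/
noncomputable def alphaOp {R : Type} [CommRing R] {n : ℕ} (i : Fin n)
    (f : MvPolynomial (Fin n) R) : MvPolynomial (Fin n) R :=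
  f - X i * substVar i 1 f - (1 - X i) * substVar i 0 f

/-! `f - f|_{yᵢ=a}` is divisible by `yᵢ - a`, and `αᵢ(f)` vanishes at `yᵢ = 0` and at
`yᵢ = 1`, so it is divisible by the coprime polynomials `yᵢ` and `1 - yᵢ`. Moreover `αᵢ` is linear
over polynomials free of `yᵢ`, so applying `αₙ, …, α₁` in turn to `f`, each `αᵢ` contributes the
factor `yᵢ(1 - yᵢ)` while preserving the factors `yⱼ(1 - yⱼ)`, `j > i`, collected so far. -/

lemma MvPolynomial.sub_aeval_mem {σ R : Type*} [CommRing R] {I : Ideal (MvPolynomial σ R)}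
    (g : σ → MvPolynomial σ R) (hg : ∀ s, X s - g s ∈ I) (f : MvPolynomial σ R) :
    f - aeval g f ∈ I := by
  have hcomp : (Ideal.Quotient.mkₐ R I).comp (aeval g) = Ideal.Quotient.mkₐ R I := by
    ext s
    simpa [Ideal.Quotient.eq] using I.neg_mem_iff.mpr (hg s)
  rw [← Ideal.Quotient.eq, ← Ideal.Quotient.mkₐ_eq_mk R, ← AlgHom.comp_apply, hcomp]

section

variable {R : Type} [CommRing R] {n : ℕ}

lemma substVar_X (i l : Fin n) (a : R) :
    substVar i a (X l) = if l = i then C a else X l :=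
  aeval_X _ _

lemma substVar_one (i : Fin n) (a : R) : substVar i a (1 : MvPolynomial (Fin n) R) = 1 :=
  map_one _

lemma substVar_sub (i : Fin n) (a : R) (p q : MvPolynomial (Fin n) R) :
    substVar i a (p - q) = substVar i a p - substVar i a q :=
  map_sub _ _ _

lemma substVar_mul (i : Fin n) (a : R) (p q : MvPolynomial (Fin n) R) :
    substVar i a (p * q) = substVar i a p * substVar i a q :=
  map_mul _ _ _

lemma substVar_substVar (i : Fin n) (a b : R) (f : MvPolynomial (Fin n) R) :
    substVar i a (substVar i b f) = substVar i b f := by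
  simp only [substVar, ← AlgHom.comp_apply]
  congr 1
  ext l
  by_cases h : l = i <;> simp [h]

lemma X_sub_C_dvd_sub_substVar (i : Fin n) (a : R) (f : MvPolynomial (Fin n) R) :
    X i - C a ∣ f - substVar i a f := by
  rw [← Ideal.mem_span_singleton]
  refine sub_aeval_mem _ (fun l => ?_) f
  split_ifs with h
  · exact h ▸ Ideal.mem_span_singleton_self _
  · simp

lemma substVar_alphaOp_zero (i : Fin n) (f : MvPolynomial (Fin n) R) :
    substVar i 0 (alphaOp i f) = 0 := by
  simp only [alphaOp, substVar_sub, substVar_mul, substVar_one, substVar_X, substVar_substVar,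
    if_pos, C_0]
  ring

lemma substVar_alphaOp_one (i : Fin n) (f : MvPolynomial (Fin n) R) :
    substVar i 1 (alphaOp i f) = 0 := by
  simp only [alphaOp, substVar_sub, substVar_mul, substVar_one, substVar_X, substVar_substVar,
    if_pos, C_1]
  ring

lemma X_mul_one_sub_X_dvd_alphaOp (i : Fin n) (f : MvPolynomial (Fin n) R) :
    X i * (1 - X i) ∣ alphaOp i f := by
  have h0 : X i ∣ alphaOp i f := by
    simpa [substVar_alphaOp_zero] using X_sub_C_dvd_sub_substVar i 0 (alphaOp i f)
  have h1 : 1 - X i ∣ alphaOp i f := by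
    rw [← neg_sub, neg_dvd]
    simpa [substVar_alphaOp_one] using X_sub_C_dvd_sub_substVar i 1 (alphaOp i f)
  have hcop : IsCoprime (X i : MvPolynomial (Fin n) R) (1 - X i) := ⟨1, 1, by ring⟩
  exact hcop.mul_dvd h0 h1

lemma alphaOp_mul_of_substVar_eq (i : Fin n) {p : MvPolynomial (Fin n) R}
    (h0 : substVar i 0 p = p) (h1 : substVar i 1 p = p) (q : MvPolynomial (Fin n) R) :
    alphaOp i (p * q) = p * alphaOp i q := by
  rw [alphaOp, alphaOp, substVar_mul, substVar_mul, h0, h1]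
  ring

lemma substVar_prod_of_notMem (i : Fin n) (a : R) {l : List (Fin n)} (hi : i ∉ l) :
    substVar i a (l.map fun j => X j * (1 - X j)).prod =
      (l.map fun j => X j * (1 - X j)).prod := by
  induction l with
  | nil => exact substVar_one i a
  | cons j l ih =>
    rw [List.mem_cons, not_or] at hi
    simp only [List.map_cons, List.prod_cons, substVar_mul, substVar_sub, substVar_one, substVar_X,
      if_neg (Ne.symm hi.1), ih hi.2]

lemma prod_dvd_foldr_alphaOp {l : List (Fin n)} (hl : l.Nodup) (f : MvPolynomial (Fin n) R) :
    (l.map fun j => (X j : MvPolynomial (Fin n) R) * (1 - X j)).prod ∣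
      l.foldr (fun i g => alphaOp i g) f := by
  induction l with
  | nil => simp
  | cons i l ih =>
    obtain ⟨hi, hl⟩ := List.nodup_cons.mp hl
    obtain ⟨q, hq⟩ := ih hl
    rw [List.foldr_cons, List.map_cons, List.prod_cons, hq,
      alphaOp_mul_of_substVar_eq i (substVar_prod_of_notMem i 0 hi)
        (substVar_prod_of_notMem i 1 hi), mul_comm]
    exact mul_dvd_mul_left _ (X_mul_one_sub_X_dvd_alphaOp i q)

end

/-- `α₁ α₂ ⋯ αₙ (f)` lies in the principal ideal generated by
`h = ∏ i, yᵢ(1-yᵢ)`; equivalently `f - α₁⋯αₙ(f) ≡ f mod (h)`. -/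
theorem alphaAll_mem_span
    (R : Type) [CommRing R] (n : ℕ) (f : MvPolynomial (Fin n) R) :
    (List.finRange n).foldr (fun i g => alphaOp i g) f ∈
      Ideal.span ({∏ i : Fin n, (X i * (1 - X i) : MvPolynomial (Fin n) R)} :
        Set (MvPolynomial (Fin n) R)) := by
  rw [Ideal.mem_span_singleton, Fin.prod_univ_def]
  exact prod_dvd_foldr_alphaOp (List.nodup_finRange n) f
end
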